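/- Let μ and ν^j (j ∈ [k]) be as above and let ν be the uniform mixture of ν^0,...,ν^{k-1}. For every good assignment α of weight at most k/2, Pr_{f~μ}[f agrees with α] ≤ 2 · Pr_{g~ν}[g agrees with α]. -/

import Mathlib

/-!
Under `μ` the labels `a_s` are uniform on a box, and `f x = α x` says that, for every `x ∈ S` and
level `i`, the label of the length-`i` prefix of `x` plus bit `i` of `x` is the `i`-th digit of
`α x`. For a level `j` not cut by `S`, the relabelling `a ↦ a'` that flips bit `j` of all prefixes
longer than `j` and, on each level-`j` prefix of a point of `S` with prescribed digit `d`,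
exchanges the values `d - 1` and `d` (both in range because `α` is good) is a bijection of the box
that carries the `μ`-agreement event onto the `ν^j`-agreement event: changing bit `j` changes the
needed label from `d - b` to `d - (1 - b)`, and since `j` is not cut, all points of `S` through
such a prefix have the same bit `b`. So `ν^j` and `μ` agree with `α` with equal probability.
At most `|S| - 1 ≤ k / 2` levels are cut, so at least half of the `ν^j` in the mixture `ν`
contribute the full `μ`-probability.
-/

/-- Index type for binary strings of length `< k`. -/
abbrev PrefixIdx (k : ℕ) := Σ i : Fin k, Fin (2 ^ (i : ℕ))

/-- Independent uniform samples `a_s ∈ {0,…,m-2}` for each binary string `s` of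
length `< k` (degenerates if `m ≤ 1`). -/
noncomputable def aDist (m k : ℕ) : PMF (PrefixIdx k → ℕ) :=
  if h : (Fintype.piFinset fun _ : PrefixIdx k => Finset.range (m - 1)).Nonempty then
    PMF.uniformOfFinset _ h
  else PMF.pure fun _ => 0

/-- `f x` has `i`-th `m`-ary digit `a_s + b` (digit 0 most significant), where
`s` is the length-`i` prefix of the `k`-bit string `x` and `b` is bit `i` of `x`. -/
def digitFun (m k : ℕ) (a : PrefixIdx k → ℕ) (x : ℕ) : ℕ :=
  ∑ i : Fin k,
    (a ⟨i, ⟨x / 2 ^ (k - (i : ℕ)) % 2 ^ (i : ℕ),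
        Nat.mod_lt _ (Nat.two_pow_pos _)⟩⟩
      + (x.testBit (k - 1 - (i : ℕ))).toNat) * m ^ (k - 1 - (i : ℕ))

/-- A value in `[m^k]` is good if none of its `m`-ary digits is `0` or `m-1`. -/
def GoodVal (m k v : ℕ) : Prop :=
  ∀ i < k, v / m ^ (k - 1 - i) % m ≠ 0 ∧ v / m ^ (k - 1 - i) % m ≠ m - 1

/-- `ν`, the uniform mixture over `j ∈ [k]` of the distributions `ν^j` of
`x ↦ f (x XOR 2^(k-1-j))` for `f ~ μ` (degenerates to `μ` if `k = 0`). -/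
noncomputable def nuMix (m k : ℕ) : PMF (ℕ → ℕ) :=
  if h : (Finset.range k).Nonempty then
    (PMF.uniformOfFinset _ h).bind fun j =>
      (aDist m k).map fun a x => digitFun m k a (x ^^^ 2 ^ (k - 1 - j))
  else (aDist m k).map (digitFun m k)

open Finset
open scoped ENNReal

theorem Nat.sum_mul_pow_eq_iff {b n v : ℕ} (c : Fin n → ℕ) (hc : ∀ i, c i < b)
    (hv : v < b ^ n) : ∑ i, c i * b ^ (i : ℕ) = v ↔ ∀ i, c i = v / b ^ (i : ℕ) % b := by
  have hsum : ∑ i, c i * b ^ (i : ℕ) = finFunctionFinEquiv (fun i => (⟨c i, hc i⟩ : Fin b)) := by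
    rw [finFunctionFinEquiv_apply]
  rw [hsum, show v = ((⟨v, hv⟩ : Fin (b ^ n)) : ℕ) from rfl, ← Fin.ext_iff,
    ← Equiv.eq_symm_apply, funext_iff]
  simp only [Fin.ext_iff, finFunctionFinEquiv_symm_apply_val]

theorem div_two_pow_eq_div_two_pow_iff {x y n : ℕ} :
    x / 2 ^ n = y / 2 ^ n ↔ ∀ t, n ≤ t → x.testBit t = y.testBit t := by
  simp only [← Nat.shiftRight_eq_div_pow]
  constructor
  · intro h t ht
    simpa [Nat.testBit_shiftRight, Nat.add_sub_cancel' ht] using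
      congrArg (Nat.testBit · (t - n)) h
  · intro h
    exact Nat.eq_of_testBit_eq fun t => by
      simpa [Nat.testBit_shiftRight] using h (n + t) (Nat.le_add_right n t)

theorem testBit_xor_two_pow_self (x n : ℕ) : (x ^^^ 2 ^ n).testBit n = !x.testBit n := by
  simp [Nat.testBit_xor]

theorem testBit_xor_two_pow {k i j : ℕ} (x : ℕ) (hi : i < k) (hj : j < k) :
    (x ^^^ 2 ^ (k - 1 - j)).testBit (k - 1 - i) = (x.testBit (k - 1 - i) ^^ decide (i = j)) := by
  rw [Nat.testBit_xor, Nat.testBit_two_pow]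
  congr 2
  exact propext (by omega)

theorem swap_sub_one_add_not_toNat {d : ℕ} (hd : 1 ≤ d) (c : ℕ) (b : Bool) :
    Equiv.swap (d - 1) d c + (!b).toNat = d ↔ c + b.toNat = d := by
  rw [Equiv.swap_apply_def]
  cases b <;> split_ifs <;> simp <;> omega

theorem PMF.toOuterMeasure_uniformOfFinset_eq_of_perm {β : Type*} {s : Finset β}
    (hs : s.Nonempty) (Φ : Equiv.Perm β) (hΦ : ∀ b, Φ b ∈ s ↔ b ∈ s) {A B : Set β}
    (hAB : ∀ b ∈ s, Φ b ∈ A ↔ b ∈ B) :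
    (PMF.uniformOfFinset s hs).toOuterMeasure A = (PMF.uniformOfFinset s hs).toOuterMeasure B := by
  classical
  rw [PMF.toOuterMeasure_uniformOfFinset_apply, PMF.toOuterMeasure_uniformOfFinset_apply]
  congr 2
  refine (Finset.card_nbij' Φ Φ.symm ?_ ?_ ?_ ?_).symm
  · intro b hb
    simp only [coe_filter, Set.mem_ofPred_eq] at hb ⊢
    exact ⟨(hΦ b).2 hb.1, (hAB b hb.1).2 hb.2⟩
  · intro b hb
    simp only [coe_filter, Set.mem_ofPred_eq] at hb ⊢
    have hs' : Φ.symm b ∈ s := (hΦ _).1 (by simpa using hb.1)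
    exact ⟨hs', (hAB _ hs').1 (by simpa using hb.2)⟩
  · exact fun b _ => Φ.symm_apply_apply b
  · exact fun b _ => Φ.apply_symm_apply b

theorem ENNReal.le_two_mul_sum_inv_card_mul {ι : Type*} {s T : Finset ι} (hs : s.Nonempty)
    (hT : T ⊆ s) (hcard : #s ≤ 2 * #T) {f : ι → ℝ≥0∞} {p : ℝ≥0∞} (hf : ∀ j ∈ T, f j = p) :
    p ≤ 2 * ∑ j ∈ s, (#s : ℝ≥0∞)⁻¹ * f j := by
  have hs0 : (#s : ℝ≥0∞) ≠ 0 := by simpa using hs.ne_empty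
  calc p = (#s : ℝ≥0∞)⁻¹ * #s * p := by
        rw [ENNReal.inv_mul_cancel hs0 (ENNReal.natCast_ne_top _), one_mul]
    _ ≤ (#s : ℝ≥0∞)⁻¹ * (2 * #T) * p := by gcongr; exact_mod_cast hcard
    _ = 2 * ∑ j ∈ T, (#s : ℝ≥0∞)⁻¹ * f j := by
        rw [sum_congr rfl fun j hj => by rw [hf j hj], sum_const, nsmul_eq_mul]
        ring
    _ ≤ 2 * ∑ j ∈ s, (#s : ℝ≥0∞)⁻¹ * f j := by gcongr

def digitAt (m k i v : ℕ) : ℕ := v / m ^ (k - 1 - i) % m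

theorem GoodVal.digitAt_mem_Ico {m k : ℕ} (hm : 0 < m) {v : ℕ} (hv : GoodVal m k v) (i : Fin k) :
    digitAt m k i v ∈ Ico 1 (m - 1) := by
  have := hv i i.isLt
  have : v / m ^ (k - 1 - i) % m < m := Nat.mod_lt _ hm
  rw [mem_Ico, digitAt]
  omega

def prefixOf {k : ℕ} (i : Fin k) (x : ℕ) : PrefixIdx k :=
  ⟨i, ⟨x / 2 ^ (k - i) % 2 ^ (i : ℕ), Nat.mod_lt _ (Nat.two_pow_pos _)⟩⟩

theorem prefixOf_eq_iff {k x y : ℕ} (hx : x < 2 ^ k) (hy : y < 2 ^ k) (i : Fin k) :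
    prefixOf i x = prefixOf i y ↔ x / 2 ^ (k - i) = y / 2 ^ (k - i) := by
  have hlt : ∀ z < 2 ^ k, z / 2 ^ (k - i) < 2 ^ (i : ℕ) := fun z hz => by
    rw [Nat.div_lt_iff_lt_mul (Nat.two_pow_pos _), ← pow_add, Nat.add_sub_cancel' i.isLt.le]
    exact hz
  simp only [prefixOf, Sigma.mk.injEq, heq_eq_eq, true_and, Fin.mk.injEq,
    Nat.mod_eq_of_lt (hlt x hx), Nat.mod_eq_of_lt (hlt y hy)]

theorem digitFun_eq_iff {m k : ℕ} {a : PrefixIdx k → ℕ} (ha : ∀ p, a p < m - 1) (x : ℕ)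
    {v : ℕ} (hv : v < m ^ k) :
    digitFun m k a x = v ↔
      ∀ i : Fin k, a (prefixOf i x) + (x.testBit (k - 1 - i)).toNat = digitAt m k i v := by
  set c : Fin k → ℕ := fun i => a (prefixOf i x) + (x.testBit (k - 1 - i)).toNat
  have hrev : digitFun m k a x = ∑ i, c (Fin.rev i) * m ^ (i : ℕ) := by
    rw [← Equiv.sum_comp Fin.revPerm]
    refine Fintype.sum_congr _ _ fun i => ?_
    simp only [Fin.revPerm_apply, Fin.rev_rev, Fin.val_rev]
    congr 2
    omega
  have hc : ∀ i, c (Fin.rev i) < m := fun i => by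
    have := ha (prefixOf (Fin.rev i) x)
    have := Bool.toNat_le (x.testBit (k - 1 - (Fin.rev i : ℕ)))
    simp only [c]
    omega
  rw [hrev, Nat.sum_mul_pow_eq_iff _ hc hv, ← Fin.revPerm.forall_congr_right]
  refine forall_congr' fun i => ?_
  simp only [Fin.revPerm_apply, Fin.rev_rev, Fin.val_rev, digitAt, c]
  rw [show k - (i + 1) = k - 1 - i by omega]

def labelBox (m k : ℕ) : Finset (PrefixIdx k → ℕ) :=
  Fintype.piFinset fun _ => range (m - 1)

theorem mem_labelBox {m k : ℕ} {a : PrefixIdx k → ℕ} : a ∈ labelBox m k ↔ ∀ p, a p < m - 1 := by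
  simp [labelBox]

theorem labelBox_nonempty {m : ℕ} (hm : 2 ≤ m) (k : ℕ) : (labelBox m k).Nonempty :=
  ⟨fun _ => 0, mem_labelBox.2 fun _ => by omega⟩

theorem aDist_eq {m : ℕ} (hm : 2 ≤ m) (k : ℕ) :
    aDist m k = PMF.uniformOfFinset (labelBox m k) (labelBox_nonempty hm k) :=
  dif_pos (labelBox_nonempty hm k)

/-- Flips bit `j`, counted from the most significant end, of every prefix longer than `j`. -/
def flipPrefix {k : ℕ} (j : ℕ) : PrefixIdx k → PrefixIdx k
  | ⟨i, s⟩ => ⟨i, if h : j < i then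
      ⟨s ^^^ 2 ^ ((i : ℕ) - 1 - j),
        Nat.xor_lt_two_pow s.isLt (Nat.pow_lt_pow_right one_lt_two (by omega))⟩
    else s⟩

theorem flipPrefix_involutive {k : ℕ} (j : ℕ) : Function.Involutive (flipPrefix (k := k) j) := by
  rintro ⟨i, s⟩
  by_cases h : j < i <;> simp [flipPrefix, h]

theorem flipPrefix_prefixOf_self {k : ℕ} (j : Fin k) (x : ℕ) :
    flipPrefix j (prefixOf j x) = prefixOf j x := by
  simp [flipPrefix, prefixOf]

theorem prefixOf_xor_two_pow {k j : ℕ} (hj : j < k) (i : Fin k) (x : ℕ) :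
    prefixOf i (x ^^^ 2 ^ (k - 1 - j)) = flipPrefix j (prefixOf i x) := by
  simp only [prefixOf, flipPrefix, Sigma.mk.injEq, heq_eq_eq, true_and]
  by_cases h : j < (i : ℕ)
  all_goals
    simp only [h, reduceDIte]
    apply Fin.ext
    apply Nat.eq_of_testBit_eq
    intro t
    simp only [Nat.testBit_mod_two_pow, ← Nat.shiftRight_eq_div_pow, Nat.testBit_shiftRight,
      Nat.testBit_xor, Nat.testBit_two_pow]
  · by_cases ht : t < i
    · have : k - 1 - j = k - i + t ↔ i - 1 - j = t := by omega
      simp [ht, this]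
    · simp [ht]
      omega
  · have : k - 1 - j ≠ k - i + t := by omega
    simp [this]

theorem prefixOf_xor_two_pow_self {k : ℕ} (j : Fin k) (x : ℕ) :
    prefixOf j (x ^^^ 2 ^ (k - 1 - j)) = prefixOf j x := by
  rw [prefixOf_xor_two_pow j.isLt, flipPrefix_prefixOf_self]

def SplitAt (k j x y : ℕ) : Prop :=
  x / 2 ^ (k - j) = y / 2 ^ (k - j) ∧ x.testBit (k - 1 - j) = false ∧ y.testBit (k - 1 - j) = true

theorem SplitAt.lt {k j x y : ℕ} (h : SplitAt k j x y) : x < y :=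
  Nat.lt_of_testBit _ h.2.1 h.2.2 fun t ht =>
    div_two_pow_eq_div_two_pow_iff.1 h.1 t (by omega)

theorem SplitAt.of_lt {k j j' x y z : ℕ} (hxy : SplitAt k j x y)
    (hyz : z / 2 ^ (k - j') = y / 2 ^ (k - j')) (hjj' : j < j') : SplitAt k j x z := by
  have hbits := div_two_pow_eq_div_two_pow_iff.1 hyz
  refine ⟨hxy.1.trans (div_two_pow_eq_div_two_pow_iff.2 fun t ht => (hbits t (by omega)).symm),
    hxy.2.1, ?_⟩
  rw [hbits _ (by omega)]
  exact hxy.2.2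

def Cuts (k : ℕ) (S : Finset ℕ) (j : ℕ) : Prop :=
  ∃ x ∈ S, ∃ y ∈ S, SplitAt k j x y

open Classical in
theorem card_filter_cuts_le (k : ℕ) (S : Finset ℕ) : #{j ∈ range k | Cuts k S j} ≤ #S - 1 := by
  set C := {j ∈ range k | Cuts k S j}
  set U : ℕ → Finset ℕ := fun j => {y ∈ S | ∃ x ∈ S, SplitAt k j x y}
  have hU : ∀ j ∈ C, (U j).Nonempty := fun j hj => by
    obtain ⟨x, hx, y, hy, hxy⟩ := (mem_filter.1 hj).2
    exact ⟨y, mem_filter.2 ⟨hy, x, hx, hxy⟩⟩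
  rcases C.eq_empty_or_nonempty with hC | ⟨j₀, hj₀⟩
  · simp [hC]
  have hS : S.Nonempty := (filter_nonempty_iff.1 (hU j₀ hj₀)).elim fun y hy => ⟨y, hy.1⟩
  -- the least point on the `1`-side of a split at level `j`; it is not `min S`, and the
  -- partner of `f j'` shows that it differs from `f j` for `j < j'`
  let f j := if h : (U j).Nonempty then (U j).min' h else 0
  have hf : ∀ j ∈ C, f j ∈ U j := fun j hj => by
    simp only [f, dif_pos (hU j hj)]
    exact min'_mem _ _
  have hf_le : ∀ j ∈ C, ∀ z ∈ U j, f j ≤ z := fun j hj z hz => by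
    simp only [f, dif_pos (hU j hj)]
    exact min'_le _ _ hz
  have hmaps : Set.MapsTo f C (S.erase (S.min' hS)) := fun j hj => by
    obtain ⟨hyS, x, hx, hxy⟩ := mem_filter.1 (hf j hj)
    exact mem_erase.2 ⟨(min'_le S x hx).trans_lt hxy.lt |>.ne', hyS⟩
  have hne : ∀ j ∈ C, ∀ j' ∈ C, j < j' → f j ≠ f j' := fun j hj j' hj' hjj' heq => by
    obtain ⟨-, x, hx, hxy⟩ := mem_filter.1 (hf j hj)
    obtain ⟨-, x', hx', hx'y⟩ := mem_filter.1 (hf j' hj')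
    rw [← heq] at hx'y
    have : x' ∈ U j := mem_filter.2 ⟨hx', x, hx, hxy.of_lt hx'y.1 hjj'⟩
    exact (hf_le j hj x' this).not_gt hx'y.lt
  have hinj : Set.InjOn f C := fun j hj j' hj' heq => by
    rcases lt_trichotomy j j' with h | h | h
    · exact (hne j hj j' hj' h heq).elim
    · exact h
    · exact (hne j' hj' j hj h heq.symm).elim
  calc #C ≤ #(S.erase (S.min' hS)) := card_le_card_of_injOn f hmaps hinj
    _ = #S - 1 := card_erase_of_mem (min'_mem S hS)

theorem testBit_eq_of_not_cuts {k : ℕ} {S : Finset ℕ} (hS : ∀ x ∈ S, x < 2 ^ k) {j : Fin k}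
    (hcut : ¬Cuts k S j) {x y : ℕ} (hx : x ∈ S) (hy : y ∈ S)
    (hxy : prefixOf j x = prefixOf j y) : x.testBit (k - 1 - j) = y.testBit (k - 1 - j) := by
  rw [prefixOf_eq_iff (hS x hx) (hS y hy)] at hxy
  cases hbx : x.testBit (k - 1 - j) <;> cases hby : y.testBit (k - 1 - j)
  all_goals first
    | rfl
    | exact (hcut ⟨x, hx, y, hy, hxy, hbx, hby⟩).elim
    | exact (hcut ⟨y, hy, x, hx, hxy.symm, hby, hbx⟩).elim

open Classical in
noncomputable def levelSwap (m : ℕ) (S : Finset ℕ) (α : ℕ → ℕ) {k : ℕ} (j : Fin k)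
    (p : PrefixIdx k) : Equiv.Perm ℕ :=
  if h : ∃ x ∈ S, prefixOf j x = p then
    Equiv.swap (digitAt m k j (α h.choose) - 1) (digitAt m k j (α h.choose))
  else 1

noncomputable def relabel (m : ℕ) (S : Finset ℕ) (α : ℕ → ℕ) {k : ℕ} (j : Fin k) :
    Equiv.Perm (PrefixIdx k → ℕ) :=
  (((flipPrefix_involutive j).toPerm _).arrowCongr (Equiv.refl ℕ)).trans
    (Equiv.piCongrRight (levelSwap m S α j))

section Relabel

variable {m k : ℕ} {S : Finset ℕ} {α : ℕ → ℕ} {j : Fin k}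

theorem relabel_apply (a : PrefixIdx k → ℕ) (p : PrefixIdx k) :
    relabel m S α j a p = levelSwap m S α j p (a (flipPrefix j p)) :=
  rfl

theorem levelSwap_prefixOf_of_ne {i : Fin k} (hij : i ≠ j) (x : ℕ) :
    levelSwap m S α j (prefixOf i x) = 1 := by
  refine dif_neg ?_
  rintro ⟨y, -, hy⟩
  exact hij (congrArg Sigma.fst hy).symm

theorem levelSwap_prefixOf {x : ℕ} (hx : x ∈ S)
    (hcons : ∀ y ∈ S, prefixOf j y = prefixOf j x → digitAt m k j (α y) = digitAt m k j (α x)) :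
    levelSwap m S α j (prefixOf j x) =
      Equiv.swap (digitAt m k j (α x) - 1) (digitAt m k j (α x)) := by
  have h : ∃ y ∈ S, prefixOf j y = prefixOf j x := ⟨x, hx, rfl⟩
  rw [levelSwap, dif_pos h, hcons _ h.choose_spec.1 h.choose_spec.2]

theorem levelSwap_lt_iff (hm : 0 < m) (hgood : ∀ x ∈ S, GoodVal m k (α x)) (p : PrefixIdx k)
    (n : ℕ) :
    levelSwap m S α j p n < m - 1 ↔ n < m - 1 := by
  unfold levelSwap
  split_ifs with h
  · have := mem_Ico.1 ((hgood _ h.choose_spec.1).digitAt_mem_Ico hm j)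
    rw [Equiv.swap_apply_def]
    split_ifs <;> omega
  · rfl

theorem relabel_mem_labelBox (hm : 0 < m) (hgood : ∀ x ∈ S, GoodVal m k (α x))
    (a : PrefixIdx k → ℕ) :
    relabel m S α j a ∈ labelBox m k ↔ a ∈ labelBox m k := by
  simp only [mem_labelBox, relabel_apply, levelSwap_lt_iff hm hgood]
  exact ⟨fun h p => flipPrefix_involutive (j : ℕ) p ▸ h (flipPrefix j p), fun h p => h _⟩

theorem relabel_prefixOf_xor (a : PrefixIdx k → ℕ) (i : Fin k) (x : ℕ) :
    relabel m S α j a (prefixOf i (x ^^^ 2 ^ (k - 1 - j))) =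
      levelSwap m S α j (prefixOf i (x ^^^ 2 ^ (k - 1 - j))) (a (prefixOf i x)) := by
  rw [relabel_apply, prefixOf_xor_two_pow j.isLt, flipPrefix_involutive]

theorem digitAt_congr_of_forall_add_toNat (hS : ∀ x ∈ S, x < 2 ^ k) (hcut : ¬Cuts k S j)
    {c : PrefixIdx k → ℕ} {f : Bool → Bool}
    (h : ∀ x ∈ S, c (prefixOf j x) + (f (x.testBit (k - 1 - j))).toNat = digitAt m k j (α x)) :
    ∀ x ∈ S, ∀ y ∈ S, prefixOf j y = prefixOf j x →
      digitAt m k j (α y) = digitAt m k j (α x) := fun x hx y hy hyx => by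
  rw [← h x hx, ← h y hy, hyx, testBit_eq_of_not_cuts hS hcut hy hx hyx]

theorem relabel_digit_iff (hm : 0 < m) (hgood : ∀ x ∈ S, GoodVal m k (α x))
    (hcons : ∀ x ∈ S, ∀ y ∈ S, prefixOf j y = prefixOf j x →
      digitAt m k j (α y) = digitAt m k j (α x))
    (a : PrefixIdx k → ℕ) {x : ℕ} (hx : x ∈ S) (i : Fin k) :
    relabel m S α j a (prefixOf i (x ^^^ 2 ^ (k - 1 - j))) +
        ((x ^^^ 2 ^ (k - 1 - j)).testBit (k - 1 - i)).toNat = digitAt m k i (α x) ↔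
      a (prefixOf i x) + (x.testBit (k - 1 - i)).toNat = digitAt m k i (α x) := by
  rw [relabel_prefixOf_xor, testBit_xor_two_pow x i.isLt j.isLt]
  by_cases hij : i = j
  · subst hij
    rw [prefixOf_xor_two_pow_self, levelSwap_prefixOf hx (hcons x hx),
      decide_eq_true rfl, Bool.xor_true]
    exact swap_sub_one_add_not_toNat (mem_Ico.1 ((hgood x hx).digitAt_mem_Ico hm i)).1 _ _
  · rw [levelSwap_prefixOf_of_ne hij]
    simp [Fin.val_eq_val, hij]

theorem agrees_relabel_xor_iff (hm : 0 < m) (hS : ∀ x ∈ S, x < 2 ^ k)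
    (hval : ∀ x ∈ S, α x < m ^ k) (hgood : ∀ x ∈ S, GoodVal m k (α x)) (hcut : ¬Cuts k S j)
    {a : PrefixIdx k → ℕ} (ha : a ∈ labelBox m k) :
    (∀ x ∈ S, digitFun m k (relabel m S α j a) (x ^^^ 2 ^ (k - 1 - j)) = α x) ↔
      ∀ x ∈ S, digitFun m k a x = α x := by
  have ha' := mem_labelBox.1 ((relabel_mem_labelBox (j := j) hm hgood a).2 ha)
  have hL := fun x hx => digitFun_eq_iff ha' (x ^^^ 2 ^ (k - 1 - j)) (hval x hx)
  have hR := fun x hx => digitFun_eq_iff (mem_labelBox.1 ha) x (hval x hx)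
  constructor
  · intro h x hx
    have hcons := digitAt_congr_of_forall_add_toNat hS hcut (c := relabel m S α j a) (f := not)
      fun z hz => by
        simpa only [prefixOf_xor_two_pow_self, testBit_xor_two_pow_self] using
          (hL z hz).1 (h z hz) j
    exact (hR x hx).2 fun i => (relabel_digit_iff hm hgood hcons a hx i).1 ((hL x hx).1 (h x hx) i)
  · intro h x hx
    have hcons := digitAt_congr_of_forall_add_toNat hS hcut (c := a) (f := id)
      fun z hz => (hR z hz).1 (h z hz) j
    exact (hL x hx).2 fun i => (relabel_digit_iff hm hgood hcons a hx i).2 ((hR x hx).1 (h x hx) i)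

end Relabel

/-- The distribution `ν^j`. -/
noncomputable def nuLevel (m k j : ℕ) : PMF (ℕ → ℕ) :=
  (aDist m k).map fun a x => digitFun m k a (x ^^^ 2 ^ (k - 1 - j))

theorem nuLevel_agree_eq {m k : ℕ} (hm : 2 ≤ m) {S : Finset ℕ} (hS : ∀ x ∈ S, x < 2 ^ k)
    {α : ℕ → ℕ} (hval : ∀ x ∈ S, α x < m ^ k) (hgood : ∀ x ∈ S, GoodVal m k (α x))
    {j : ℕ} (hj : j < k) (hcut : ¬Cuts k S j) :
    (nuLevel m k j).toOuterMeasure {f | ∀ x ∈ S, f x = α x} =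
      ((aDist m k).map (digitFun m k)).toOuterMeasure {f | ∀ x ∈ S, f x = α x} := by
  rw [nuLevel, PMF.toOuterMeasure_map_apply, PMF.toOuterMeasure_map_apply, aDist_eq hm]
  exact PMF.toOuterMeasure_uniformOfFinset_eq_of_perm _ (relabel m S α ⟨j, hj⟩)
    (relabel_mem_labelBox (by omega) hgood) fun a ha =>
      agrees_relabel_xor_iff (j := ⟨j, hj⟩) (by omega) hS hval hgood hcut ha

theorem nuMix_toOuterMeasure {m k : ℕ} (hk : 0 < k) (E : Set (ℕ → ℕ)) :
    (nuMix m k).toOuterMeasure E =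
      ∑ j ∈ range k, (k : ℝ≥0∞)⁻¹ * (nuLevel m k j).toOuterMeasure E := by
  have hne : (range k).Nonempty := nonempty_range_iff.2 hk.ne'
  rw [nuMix, dif_pos hne, PMF.toOuterMeasure_bind_apply,
    tsum_eq_sum (s := range k) fun j hj => by simp [PMF.uniformOfFinset_apply, hj]]
  refine sum_congr rfl fun j hj => ?_
  rw [PMF.uniformOfFinset_apply, if_pos hj, card_range, nuLevel]

/-- For every good assignment `α : S → [m^k]` of weight at most `k/2`,
`Pr_{f~μ}[f agrees with α] ≤ 2 · Pr_{g~ν}[g agrees with α]`. -/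
theorem stmt13 (m k : ℕ) (hm : 2 ≤ m) (hk : 0 < k)
    (S : Finset ℕ) (hS : ∀ x ∈ S, x < 2 ^ k) (α : ℕ → ℕ)
    (hval : ∀ x ∈ S, α x < m ^ k)
    (hgood : ∀ x ∈ S, GoodVal m k (α x))
    (hw : (S.card : ℝ) ≤ k / 2) :
    ((aDist m k).map (digitFun m k)).toOuterMeasure {f | ∀ x ∈ S, f x = α x} ≤
      2 * (nuMix m k).toOuterMeasure {g | ∀ x ∈ S, g x = α x} := by
  classical
  have hweight : 2 * #S ≤ k := by exact_mod_cast (by linarith : (2 * #S : ℝ) ≤ k)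
  have huncut : k ≤ 2 * #{j ∈ range k | ¬Cuts k S j} := by
    have hsplit := card_filter_add_card_filter_not (s := range k) fun j => Cuts k S j
    have hcuts := card_filter_cuts_le k S
    rw [card_range] at hsplit
    omega
  rw [nuMix_toOuterMeasure hk]
  simpa only [card_range] using ENNReal.le_two_mul_sum_inv_card_mul
    (nonempty_range_iff.2 hk.ne') (filter_subset _ _) (by rwa [card_range]) fun j hj =>
      nuLevel_agree_eq hm hS hval hgood (mem_range.1 (mem_filter.1 hj).1) (mem_filter.1 hj).2
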